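/- arXiv:math/0402066 — 3 statements merged into one kernel-verified Lean document; each statement's English description precedes it below -/
import Mathlib

section
/- Let x be a regular ultrafilter on κ, and let Y be a compact Hausdorff space of weight at most κ, with y ∈ F ⊆ Y and F having empty interior. Then there is a function g : κ → Y such that the Stone extension βg : βκ → Y is onto, (βg)(x) = y, and g(ξ) ∉ F for all ξ < κ (hence g⁻¹(F) is nowhere dense in βκ, being a subset of κ* with empty interior). -/
open Cardinal TopologicalSpace

/-- `x` is regular iff there are `E_α ∈ x` for `α < κ` such that every `ξ < κ`
belongs to only finitely many `E_α`. -/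
def Ultrafilter.IsRegularUF {κ : Type*} (x : Ultrafilter κ) : Prop :=
  ∃ E : κ → Set κ, (∀ α, E α ∈ x) ∧ ∀ ξ, {α | ξ ∈ E α}.Finite

/-- The weight of a topological space: the least cardinality of a base. -/
noncomputable def weight (Y : Type*) [TopologicalSpace Y] : Cardinal :=
  ⨅ B : {B : Set (Set Y) // IsTopologicalBasis B}, #B.1

/-!
Fix a base `B` of `Y` with `|B| ≤ κ` and an injection `j : B → κ` whose range is not in `x`
(split `κ` into two halves of size `κ`). On `range j`, `g` takes a point of `Y \ F` in each
nonempty basic set, so `g` has dense range and `βg` is onto. On the complement, which is in `x`,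
regularity gives `E_b ∈ x` (`b ∈ B`) such that each `ξ` lies in finitely many `E_b`; let `g ξ`
be a point of `Y \ F` in the intersection of those finitely many basic neighbourhoods `b` of `y`
with `ξ ∈ E_b`. Then `g` sends `E_b` into `b` off `range j`, so `g` converges to `y` along `x`.
-/

open Filter Set Function Topology

universe u

theorem exists_isTopologicalBasis_mk_le_of_weight_le {Y κ : Type u} [TopologicalSpace Y]
    (hw : weight Y ≤ #κ) : ∃ B : Set (Set Y), IsTopologicalBasis B ∧ #B ≤ #κ := by
  have : Nonempty {B : Set (Set Y) // IsTopologicalBasis B} :=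
    ⟨⟨_, isTopologicalBasis_opens⟩⟩
  obtain ⟨⟨B, hB⟩, hBw⟩ := ciInf_mem fun B : {B : Set (Set Y) // IsTopologicalBasis B} ↦ #B.1
  exact ⟨B, hB, hBw.le.trans hw⟩

theorem TopologicalSpace.IsTopologicalBasis.nhds_hasBasis_subtype {Y : Type*}
    [TopologicalSpace Y] {B : Set (Set Y)} (hB : IsTopologicalBasis B) (y : Y) :
    (𝓝 y).HasBasis (fun b : B ↦ y ∈ (b : Set Y)) (↑) :=
  ⟨fun t ↦ by simp only [hB.nhds_hasBasis.mem_iff, Subtype.exists, exists_prop, and_assoc]⟩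

theorem TopologicalSpace.IsTopologicalBasis.exists_denseRange_forall_mem {Y : Type*}
    [TopologicalSpace Y] [Nonempty Y] {B : Set (Set Y)} (hB : IsTopologicalBasis B) {D : Set Y}
    (hD : Dense D) : ∃ d : B → Y, (∀ b, d b ∈ D) ∧ DenseRange d := by
  have (b : B) : ∃ z ∈ D, (b : Set Y).Nonempty → z ∈ (b : Set Y) := by
    by_cases hb : (b : Set Y).Nonempty
    · obtain ⟨z, hzb, hzD⟩ := hD.inter_open_nonempty _ (hB.isOpen b.2) hb
      exact ⟨z, hzD, fun _ ↦ hzb⟩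
    · obtain ⟨z, hzD⟩ := hD.nonempty
      exact ⟨z, hzD, fun h ↦ absurd h hb⟩
  choose d hdD hdb using this
  exact ⟨d, hdD, hB.dense_iff.2 fun b hbB hb ↦ ⟨d ⟨b, hbB⟩, hdb ⟨b, hbB⟩ hb, mem_range_self _⟩⟩

theorem Ultrafilter.exists_injective_compl_range_mem {κ ι : Type u} [Infinite κ]
    (x : Ultrafilter κ) (hι : #ι ≤ #κ) : ∃ j : ι → κ, Injective j ∧ (range j)ᶜ ∈ x := by
  obtain ⟨i⟩ := hι
  obtain ⟨e⟩ : Nonempty (κ ⊕ κ ≃ κ) :=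
    Cardinal.eq.1 (by simp [add_eq_self (aleph0_le_mk κ)])
  have hcompl : (range (e ∘ Sum.inl))ᶜ = range (e ∘ Sum.inr) := by
    rw [range_comp, range_comp, ← image_compl_eq e.bijective, compl_range_inl]
  obtain ⟨k, hk, hkx⟩ : ∃ k : κ → κ, Injective k ∧ (range k)ᶜ ∈ x := by
    by_cases h : range (e ∘ Sum.inl) ∈ x
    · refine ⟨e ∘ Sum.inr, e.injective.comp Sum.inr_injective, ?_⟩
      rwa [← hcompl, compl_compl]
    · exact ⟨e ∘ Sum.inl, e.injective.comp Sum.inl_injective,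
        Ultrafilter.compl_mem_iff_notMem.2 h⟩
  exact ⟨k ∘ i, hk.comp i.injective,
    mem_of_superset hkx (compl_subset_compl.2 (range_comp_subset_range i k))⟩

theorem Ultrafilter.IsRegularUF.exists_tendsto_forall_mem {κ ι : Type u} {x : Ultrafilter κ}
    (hx : x.IsRegularUF) (hι : #ι ≤ #κ) {Y : Type*} {l : Filter Y} {p : ι → Prop}
    {s : ι → Set Y} (hl : l.HasBasis p s) {D : Set Y} (hD : (l ⊓ 𝓟 D).NeBot) :
    ∃ w : κ → Y, (∀ ξ, w ξ ∈ D) ∧ Tendsto w x l := by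
  obtain ⟨E, hEx, hEfin⟩ := hx
  obtain ⟨e⟩ := hι
  have (ξ : κ) : ∃ z ∈ D, ∀ i, ξ ∈ E (e i) → p i → z ∈ s i := by
    have hfin : {i | ξ ∈ E (e i) ∧ p i}.Finite :=
      ((hEfin ξ).preimage e.injective.injOn).subset fun _ hi ↦ hi.1
    have hmem : ⋂ i ∈ {i | ξ ∈ E (e i) ∧ p i}, s i ∈ l :=
      (biInter_mem hfin).2 fun i hi ↦ hl.mem_of_mem hi.2
    obtain ⟨z, hzs, hzD⟩ := hD.nonempty_of_mem (inter_mem_inf hmem (mem_principal_self D))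
    exact ⟨z, hzD, fun i hξ hi ↦ mem_iInter₂.1 hzs i ⟨hξ, hi⟩⟩
  choose w hwD hws using this
  exact ⟨w, hwD, hl.tendsto_right_iff.2 fun i hi ↦
    mem_of_superset (hEx (e i)) fun ξ hξ ↦ hws ξ i hξ hi⟩

theorem Ultrafilter.extend_surjective_of_denseRange {κ Y : Type*} [TopologicalSpace Y]
    [T2Space Y] [CompactSpace Y] {g : κ → Y} (hg : DenseRange g) :
    Surjective (Ultrafilter.extend g) := by
  rw [← ultrafilter_extend_extends g] at hg
  rw [← range_eq_univ, ← hg.of_comp.closure_range]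
  exact ((isCompact_range (continuous_ultrafilter_extend g)).isClosed.closure_eq).symm

theorem regular_ultrafilter_map_onto_general {κ : Type u} [Infinite κ] (x : Ultrafilter κ)
    (hx : x.IsRegularUF) {Y : Type u} [TopologicalSpace Y] [CompactSpace Y] [T2Space Y]
    (F : Set Y) (y : Y) (hw : weight Y ≤ #κ) (hF : interior F = ∅) :
    ∃ g : κ → Y,
      Function.Surjective (Ultrafilter.extend g) ∧
      Ultrafilter.extend g x = y ∧
      (∀ ξ : κ, g ξ ∉ F) ∧
      IsNowhereDense ((pure : κ → Ultrafilter κ) '' (g ⁻¹' F)) := by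
  have : Nonempty Y := ⟨y⟩
  have hD : Dense Fᶜ := interior_eq_empty_iff_dense_compl.1 hF
  obtain ⟨B, hB, hBκ⟩ := exists_isTopologicalBasis_mk_le_of_weight_le hw
  obtain ⟨d, hdF, hd⟩ := hB.exists_denseRange_forall_mem hD
  obtain ⟨j, hj, hjx⟩ := x.exists_injective_compl_range_mem hBκ
  obtain ⟨w, hwF, hwy⟩ := hx.exists_tendsto_forall_mem hBκ (hB.nhds_hasBasis_subtype y)
    (mem_closure_iff_nhdsWithin_neBot.1 (hD y))
  obtain ⟨g, hgF, hg, hgy⟩ : ∃ g : κ → Y, (∀ ξ, g ξ ∉ F) ∧ DenseRange g ∧ Tendsto g x (𝓝 y) := by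
    refine ⟨extend j d w, fun ξ ↦ ?_, (extend_comp hj d w ▸ hd).of_comp,
      hwy.congr' (mem_of_superset hjx fun ξ hξ ↦ (extend_apply' d w ξ hξ).symm)⟩
    rcases range_extend_subset j d w (mem_range_self ξ) with ⟨b, hb⟩ | ⟨η, -, hη⟩
    · exact hb ▸ hdF b
    · exact hη ▸ hwF η
  have hg_preimage : g ⁻¹' F = ∅ := eq_empty_of_forall_notMem hgF
  refine ⟨g, Ultrafilter.extend_surjective_of_denseRange hg, ultrafilter_extend_eq_iff.2 hgy,
    hgF, ?_⟩
  rw [hg_preimage, image_empty]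
  exact isNowhereDense_empty

/-- Let `x` be a regular ultrafilter on an infinite cardinal `κ`, `Y` compact Hausdorff
of weight at most `κ`, `y ∈ F ⊆ Y` with `F` of empty interior.  Then there is
`g : κ → Y` whose Stone extension `βg : βκ → Y` is onto, with `βg(x) = y` and
`g(ξ) ∉ F` for all `ξ`; hence `g⁻¹(F)`, viewed as a subset of `βκ` via `pure`,
is nowhere dense in `βκ`. -/
theorem regular_ultrafilter_map_onto {κ : Type u} [Infinite κ] (x : Ultrafilter κ)
    (hx : x.IsRegularUF) {Y : Type u} [TopologicalSpace Y] [CompactSpace Y] [T2Space Y]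
    (F : Set Y) (y : Y) (hyF : y ∈ F) (hw : weight Y ≤ #κ) (hF : interior F = ∅) :
    ∃ g : κ → Y,
      Function.Surjective (Ultrafilter.extend g) ∧
      Ultrafilter.extend g x = y ∧
      (∀ ξ : κ, g ξ ∉ F) ∧
      IsNowhereDense ((pure : κ → Ultrafilter κ) '' (g ⁻¹' F)) :=
  regular_ultrafilter_map_onto_general x hx F y hw hF
end

section
/- No ℵ_n (for n < ω) is a Jónsson cardinal: for each natural number n there exists ψ : [ℵ_n]^{<ω} → ℵ_n such that for every subset W of ℵ_n of cardinality ℵ_n, the image ψ([W]^{<ω}) equals ℵ_n. -/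
/-!
`ℵ₀` is not Jónsson: send a finite set to its size. If `κ` is infinite and not Jónsson, witnessed
by `ψ₀`, then neither is `κ⁺`: fix for every `x < κ⁺` an injection `g x : [0, x) → κ`, and let
`ψ (T ∪ {x}) = (g x)⁻¹ (ψ₀ (g x '' T))` for `T ⊆ [0, x)`. Given `W` of size `κ⁺` and `γ < κ⁺`, take
`V ⊆ W` of size `κ`; by regularity of `κ⁺` some `x ∈ W` lies above `V ∪ {γ}`, and `ψ₀` reaches
`g x γ` from a finite subset of `g x '' V`.
-/

open Cardinal Set

universe u v

def NotJonsson (α : Type u) : Prop :=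
  ∃ ψ : Finset α → α, ∀ W : Set α, #W = #α → ∀ y, ∃ s : Finset α, ↑s ⊆ W ∧ ψ s = y

namespace NotJonsson

theorem of_equiv {α : Type u} {β : Type v} (h : NotJonsson α) (e : α ≃ β) : NotJonsson β := by
  obtain ⟨ψ, hψ⟩ := h
  refine ⟨fun s => e (ψ (s.map e.symm.toEmbedding)), fun W hW y => ?_⟩
  have hW' : #(e.symm '' W) = #α := by
    rw [← lift_inj.{u, v}, mk_image_eq_lift _ _ e.symm.injective, hW, lift_mk_eq'.2 ⟨e.symm⟩]
  obtain ⟨s, hs, hψs⟩ := hψ _ hW' (e.symm y)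
  refine ⟨s.map e.toEmbedding, ?_, ?_⟩
  · rw [Finset.coe_map, Equiv.coe_toEmbedding, image_subset_iff]
    intro a ha
    obtain ⟨w, hw, rfl⟩ := hs ha
    simpa using hw
  · simp [Finset.map_map, hψs]

end NotJonsson

theorem notJonsson_nat : NotJonsson ℕ := by
  refine ⟨Finset.card, fun W hW n => ?_⟩
  have hW : W.Infinite := by
    rw [← Set.infinite_coe_iff, Cardinal.infinite_iff, hW, mk_nat]
  exact hW.exists_subset_card_eq n

theorem Cardinal.exists_injOn_of_mk_le {α β : Type u} [Nonempty α] {s : Set β} (h : #s ≤ #α) :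
    ∃ f : β → α, InjOn f s := by
  obtain ⟨e⟩ := h
  classical
  refine ⟨Function.extend Subtype.val e fun _ => Classical.arbitrary α, fun x hx y hy hxy => ?_⟩
  simp only [Subtype.val_injective.extend_apply e _ ⟨x, hx⟩,
    Subtype.val_injective.extend_apply e _ ⟨y, hy⟩] at hxy
  simpa using e.injective hxy

theorem Order.exists_forall_lt_of_mk_lt_cof {α : Type u} [LinearOrder α] {s : Set α}
    (hs : #s < Order.cof α) : ∃ b, ∀ x ∈ s, x < b := by
  by_contra! h
  exact hs.not_ge (Order.cof_le h)

theorem NotJonsson.of_mk_Iio_le {α β : Type u} [LinearOrder β] [Nonempty β]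
    (hα : NotJonsson α) (hIio : ∀ x : β, #(Iio x) ≤ #α)
    (hW : ∀ W : Set β, #W = #β → ∀ γ, ∃ x ∈ W, γ < x ∧ #α ≤ #↑(W ∩ Iio x)) :
    NotJonsson β := by
  classical
  obtain ⟨ψ₀, hψ₀⟩ := hα
  have : Nonempty α := ⟨ψ₀ ∅⟩
  choose g hg using fun x => exists_injOn_of_mk_le (hIio x)
  let ψ : Finset β → β := fun s =>
    if hs : s.Nonempty then
      Function.invFunOn (g (s.max' hs)) (Iio (s.max' hs))
        (ψ₀ ((s.erase (s.max' hs)).image (g (s.max' hs))))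
    else Classical.arbitrary β
  refine ⟨ψ, fun W hW' γ => ?_⟩
  obtain ⟨x, hxW, hγx, hWx⟩ := hW W hW' γ
  obtain ⟨V, hV, hVcard⟩ := le_mk_iff_exists_subset.1 hWx
  have hgV : #(g x '' V) = #α := by
    rw [mk_image_eq_of_injOn _ _ ((hg x).mono (hV.trans inter_subset_right)), hVcard]
  obtain ⟨t, htV, hψt⟩ := hψ₀ _ hgV (g x γ)
  obtain ⟨T, hTV, rfl⟩ := Finset.subset_set_image_iff.1 htV
  have hTx : ∀ y ∈ T, y < x := fun y hy => (hV (hTV hy)).2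
  refine ⟨insert x T, ?_, ?_⟩
  · rw [Finset.coe_insert]
    exact insert_subset hxW fun y hy => (hV (hTV hy)).1
  · have hne : (insert x T).Nonempty := Finset.insert_nonempty x T
    have hmax : (insert x T).max' hne = x :=
      le_antisymm (Finset.max'_le _ _ _ fun y hy => (Finset.mem_insert.1 hy).elim le_of_eq
        fun hy => (hTx y hy).le) (Finset.le_max' _ _ (Finset.mem_insert_self x T))
    have hxT : x ∉ T := fun h => (hTx x h).false
    simp only [ψ, dif_pos hne, hmax, Finset.erase_insert hxT, hψt]
    exact (hg x).leftInvOn_invFunOn hγx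

theorem Cardinal.exists_mem_lt_le_mk_inter_Iio {κ : Cardinal.{u}} (hκ : ℵ₀ ≤ κ)
    {W : Set (Order.succ κ).ord.ToType} (hW : #W = Order.succ κ)
    (γ : (Order.succ κ).ord.ToType) : ∃ x ∈ W, γ < x ∧ κ ≤ #↑(W ∩ Iio x) := by
  obtain ⟨V, hVW, hV⟩ := le_mk_iff_exists_subset.1 (hW ▸ Order.le_succ κ)
  have hsmall : #(insert γ V : Set _) < Order.cof (Order.succ κ).ord.ToType := by
    rw [Ordinal.cof_toType, (isRegular_succ hκ).cof_ord]
    exact (mk_insert_le.trans_eq (by rw [hV, add_one_eq hκ])).trans_lt (Order.lt_succ κ)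
  obtain ⟨b, hb⟩ := Order.exists_forall_lt_of_mk_lt_cof hsmall
  obtain ⟨x, hxW, hbx⟩ : ∃ x ∈ W, b ≤ x := by
    by_contra! hWb
    have hIio : #(Iio b) < Order.succ κ := (mk_Iio_lt b (by simp)).trans_eq (mk_ord_toType _)
    exact ((mk_le_mk_of_subset hWb).trans_lt hIio).ne hW
  refine ⟨x, hxW, (hb γ (mem_insert γ V)).trans_le hbx, hV.symm.le.trans (mk_le_mk_of_subset ?_)⟩
  exact fun v hv => ⟨hVW hv, (hb v (mem_insert_of_mem γ hv)).trans_le hbx⟩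

theorem NotJonsson.toType_ord_succ {κ : Cardinal.{u}} (hκ : ℵ₀ ≤ κ)
    (h : NotJonsson κ.ord.ToType) : NotJonsson (Order.succ κ).ord.ToType := by
  have : Nonempty (Order.succ κ).ord.ToType := by simp [Ordinal.nonempty_toType_iff]
  refine h.of_mk_Iio_le (fun x => ?_) (fun W hW γ => ?_)
  · exact Order.lt_succ_iff.1 ((mk_Iio_lt x (by simp)).trans_eq (by simp))
  · rw [mk_ord_toType] at hW ⊢
    exact exists_mem_lt_le_mk_inter_Iio hκ hW γ

theorem notJonsson_toType_ord_aleph_natCast (n : ℕ) : NotJonsson (ℵ_ n).ord.ToType.{u} := by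
  induction n with
  | zero =>
    refine notJonsson_nat.of_equiv (Classical.choice (lift_mk_eq'.1 ?_))
    simp
  | succ n ih =>
    rw [Nat.cast_succ, ← succ_aleph]
    exact ih.toType_ord_succ (aleph0_le_aleph n)

/-- No `ℵ_n` (for `n < ω`) is a Jónsson cardinal: for every `n` there is
`ψ : [ℵ_n]^{<ω} → ℵ_n` such that for every `W ⊆ ℵ_n` of cardinality `ℵ_n`,
the image of the finite subsets of `W` under `ψ` is all of `ℵ_n`. -/
theorem aleph_n_not_jonsson (n : ℕ) :
    ∃ ψ : Finset (aleph n).ord.ToType → (aleph n).ord.ToType,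
      ∀ W : Set (aleph n).ord.ToType, #W = aleph n →
        {y | ∃ s : Finset (aleph n).ord.ToType, ↑s ⊆ W ∧ ψ s = y} = Set.univ := by
  obtain ⟨ψ, hψ⟩ := notJonsson_toType_ord_aleph_natCast n
  -- the domain and the codomain of `ψ` in the statement live in independent universes
  obtain ⟨e⟩ : Nonempty ((aleph n).ord.ToType ≃ (aleph n).ord.ToType) := lift_mk_eq'.1 (by simp)
  refine ⟨e ∘ ψ, fun W hW => eq_univ_of_forall fun y => ?_⟩
  obtain ⟨s, hs, hψs⟩ := hψ W (by rw [hW, mk_ord_toType]) (e.symm y)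
  exact ⟨s, hs, by simp [hψs]⟩
end

section
/- Let x be an ultrafilter on κ with a family ⟨E_α : α < κ⟩ witnessing regularity (each E_α ∈ x, each ξ ∈ κ lies in only finitely many E_α), let Y be a topological space, y ∈ Y, and ⟨U_α : α < κ⟩ a neighborhood base at y. If g : κ → Y satisfies g(ξ) ∈ ⋂{U_α : ξ ∈ E_α} for every ξ, then g converges to y along x: for every neighborhood U of y, {ξ : g(ξ) ∈ U} ∈ x. Hence (βg)(x) = y when Y is compact Hausdorff. -/
/-- Let `⟨E_α : α < κ⟩` witness regularity of the ultrafilter `x` on `κ`, let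
`⟨U_α : α < κ⟩` be a neighborhood base at `y ∈ Y`, and suppose
`g(ξ) ∈ ⋂ {U_α : ξ ∈ E_α}` for every `ξ`.  Then `g` converges to `y` along `x`,
and hence `βg(x) = y` when `Y` is compact Hausdorff. -/
theorem regular_witness_converges {κ : Type u} {Y : Type*} [TopologicalSpace Y]
    (x : Ultrafilter κ) (E : κ → Set κ) (hE₁ : ∀ α, E α ∈ x)
    (hE₂ : ∀ ξ, {α | ξ ∈ E α}.Finite) (y : Y) (U : κ → Set Y)
    (hU₁ : ∀ α, U α ∈ nhds y) (hU₂ : ∀ V ∈ nhds y, ∃ α, U α ⊆ V)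
    (g : κ → Y) (hg : ∀ ξ, g ξ ∈ ⋂ α ∈ {α | ξ ∈ E α}, U α) :
    (∀ V ∈ nhds y, {ξ | g ξ ∈ V} ∈ x) ∧
    (∀ (_ : CompactSpace Y) (_ : T2Space Y), Ultrafilter.extend g x = y) := by
  have key : ∀ V ∈ nhds y, {ξ | g ξ ∈ V} ∈ x := by
    intro V hV
    obtain ⟨α, hα⟩ := hU₂ V hV
    refine x.toFilter.mem_of_superset (hE₁ α) ?_
    intro ξ hξ
    exact hα (by simpa using Set.mem_iInter₂.mp (hg ξ) α hξ)
  refine ⟨key, fun _ _ => ?_⟩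
  rw [ultrafilter_extend_eq_iff]
  intro V hV
  exact key V hV
end
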